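/- For any γ > 0, the alternating minimization envelope ψ_γ admits the representation ψ_γ(y) = f*(-Aᵀy) - (γ/2)‖Ax(y)‖² + (g*)^γ(y + γAx(y)), where (g*)^γ is the Moreau envelope of g* with parameter γ and x(y) = ∇f*(-Aᵀy). -/

import Mathlib

open scoped InnerProductSpace RealInnerProductSpace
open Filter Topology

noncomputable section

abbrev E (n : ℕ) := EuclideanSpace ℝ (Fin n)

/-- Convexity for extended-real-valued functions. -/
def EConvexOn {n : ℕ} (f : E n → EReal) : Prop :=
  ∀ x y : E n, ∀ a b : ℝ, 0 ≤ a → 0 ≤ b → a + b = 1 →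
    f (a • x + b • y) ≤ (a : EReal) * f x + (b : EReal) * f y

def ProperFun {n : ℕ} (f : E n → EReal) : Prop :=
  (∃ x, f x ≠ ⊤) ∧ ∀ x, f x ≠ ⊥

def ProperClosedConvex {n : ℕ} (f : E n → EReal) : Prop :=
  ProperFun f ∧ LowerSemicontinuous f ∧ EConvexOn f

/-- `f` is strongly convex with modulus `μ`: `f - (μ/2)‖·‖²` is convex. -/
def StronglyConvexWithMod {n : ℕ} (μ : ℝ) (f : E n → EReal) : Prop :=
  EConvexOn (fun x => f x - ((μ / 2 * ‖x‖ ^ 2 : ℝ) : EReal))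

/-- Fenchel conjugate. -/
def conjFn {n : ℕ} (f : E n → EReal) (y : E n) : EReal :=
  ⨆ x : E n, ((⟪x, y⟫_ℝ : ℝ) : EReal) - f x

/-- Convex subdifferential. -/
def Subdiff {n : ℕ} (f : E n → EReal) (x : E n) : Set (E n) :=
  {v | ∀ z, f x + ((⟪v, z - x⟫_ℝ : ℝ) : EReal) ≤ f z}

/-- `p` is the proximal point of `x` for `h` with stepsize `γ`. -/
def IsProx {n : ℕ} (γ : ℝ) (h : E n → EReal) (x p : E n) : Prop :=
  ∀ z : E n, h p + ((1 / (2 * γ) * ‖p - x‖ ^ 2 : ℝ) : EReal) ≤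
    h z + ((1 / (2 * γ) * ‖z - x‖ ^ 2 : ℝ) : EReal)

/-- Moreau envelope. -/
def moreauEnv {n : ℕ} (γ : ℝ) (h : E n → EReal) (x : E n) : EReal :=
  ⨅ z : E n, h z + ((1 / (2 * γ) * ‖z - x‖ ^ 2 : ℝ) : EReal)

/-- Dual objective `ψ(y) = f*(-Aᵀy) + g*(y)`. -/
def dualObj {n m : ℕ} (f : E n → EReal) (g : E m → EReal) (A : E n →L[ℝ] E m)
    (y : E m) : EReal :=
  conjFn f (-(ContinuousLinearMap.adjoint A y)) + conjFn g y

/-- The alternating minimization envelope `ψ_γ(y) = -L_γ(x(y), z_γ(y), y)`. -/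
def AME {n m : ℕ} (f : E n → EReal) (g : E m → EReal) (A : E n →L[ℝ] E m)
    (γ : ℝ) (xmin : E m → E n) (zmin : E m → E m) (y : E m) : EReal :=
  -(f (xmin y) + g (zmin y)
    + ((⟪y, A (xmin y) - zmin y⟫_ℝ + γ / 2 * ‖A (xmin y) - zmin y‖ ^ 2 : ℝ) : EReal))

/-! The minimizer `x = x(y)` gives `-Aᵀy ∈ ∂f(x)`, and the optimality condition of the prox step
gives `u := y + γAx - γz ∈ ∂g(z)`. By the Fenchel–Young equality both conjugates are then
explicit, and `v ↦ ⟪z, v⟫ - g(z)` is an affine minorant of `g*` touching it at `u = w - γz`, where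
`w = y + γAx`; the Moreau envelope of such an affine function is attained exactly at `w - γz`, so
`(g*)^γ(w)` is explicit as well and the identity is a rearrangement of squares. -/

lemma le_of_forall_pos_le_add_mul {a b C : ℝ} (h : ∀ t : ℝ, 0 < t → t ≤ 1 → a ≤ b + t * C) :
    a ≤ b := by
  have hlim : Tendsto (fun t : ℝ => b + t * C) (𝓝[>] 0) (𝓝 b) := by
    have : Continuous fun t : ℝ => b + t * C := by fun_prop
    simpa using (this.tendsto 0).mono_left nhdsWithin_le_nhds
  refine ge_of_tendsto hlim ?_
  filter_upwards [Ioc_mem_nhdsGT one_pos] with t ht using h t ht.1 ht.2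

lemma EReal.ne_top_of_add_coe_le {X Y : EReal} {r s : ℝ} (h : X + r ≤ Y + s) (hY : Y ≠ ⊤) :
    X ≠ ⊤ := by
  rintro rfl
  rw [EReal.top_add_coe, top_le_iff] at h
  induction Y <;> simp_all [← EReal.coe_add]

lemma norm_add_smul_sq {V : Type*} [NormedAddCommGroup V] [InnerProductSpace ℝ V] (a b : V)
    (t : ℝ) : ‖a + t • b‖ ^ 2 = ‖a‖ ^ 2 + 2 * t * ⟪a, b⟫_ℝ + t ^ 2 * ‖b‖ ^ 2 := by
  rw [norm_add_sq_real, real_inner_smul_right, norm_smul, mul_pow, Real.norm_eq_abs, sq_abs]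
  ring

section Convex

variable {k : ℕ}

lemma coe_inner_sub_le_conjFn {f : E k → EReal} {x s : E k} {F : ℝ} (hF : f x = F) :
    ((⟪x, s⟫_ℝ - F : ℝ) : EReal) ≤ conjFn f s := by
  rw [EReal.coe_sub, ← hF]
  exact le_iSup (fun v : E k => ((⟪v, s⟫_ℝ : ℝ) : EReal) - f v) x

lemma conjFn_eq_of_mem_subdiff {f : E k → EReal} {x s : E k} {F : ℝ} (hF : f x = F)
    (hs : s ∈ Subdiff f x) : conjFn f s = ((⟪x, s⟫_ℝ - F : ℝ) : EReal) := by
  refine le_antisymm (iSup_le fun v => ?_) (coe_inner_sub_le_conjFn hF)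
  have hv : ((F + ⟪s, v - x⟫_ℝ : ℝ) : EReal) ≤ f v := by simpa [hF] using hs v
  calc ((⟪v, s⟫_ℝ : ℝ) : EReal) - f v ≤ ((⟪v, s⟫_ℝ : ℝ) : EReal) - ((F + ⟪s, v - x⟫_ℝ : ℝ) : EReal) :=
        EReal.sub_le_sub le_rfl hv
    _ = ((⟪x, s⟫_ℝ - F : ℝ) : EReal) := by
        rw [← EReal.coe_sub, inner_sub_right, real_inner_comm s v, real_inner_comm s x]
        ring_nf

lemma neg_adjoint_mem_subdiff {n m : ℕ} {f : E n → EReal} {A : E n →L[ℝ] E m} {x : E n}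
    {y : E m} {F : ℝ} (hF : f x = F)
    (hmin : ∀ v, f x + ((⟪y, A x⟫_ℝ : ℝ) : EReal) ≤ f v + ((⟪y, A v⟫_ℝ : ℝ) : EReal)) :
    -(ContinuousLinearMap.adjoint A y) ∈ Subdiff f x := by
  intro v
  have hv := hmin v
  rw [hF, ← EReal.sub_le_iff_le_add (Or.inl (EReal.coe_ne_bot _)) (Or.inl (EReal.coe_ne_top _)),
    ← EReal.coe_add, ← EReal.coe_sub] at hv
  rw [hF, ← EReal.coe_add]
  convert hv using 2
  rw [inner_neg_left, ContinuousLinearMap.adjoint_inner_left, map_sub, inner_sub_right]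
  ring

/-- Compare `p` with the points `(1 - s)p + sv` of the segment towards `v`, use convexity of `h`,
divide by `s` and let `s → 0`. -/
lemma IsProx.inv_smul_sub_mem_subdiff {t : ℝ} (ht : 0 < t) {h : E k → EReal}
    (hconv : EConvexOn h) (hbot : ∀ v, h v ≠ ⊥) {x p : E k} {P : ℝ} (hP : h p = P)
    (hprox : IsProx t h x p) : t⁻¹ • (x - p) ∈ Subdiff h p := by
  intro v
  rcases eq_or_ne (h v) ⊤ with hv | hv
  · simp [hv]
  lift h v to ℝ using ⟨hv, hbot v⟩ with V hV
  rw [hP, ← EReal.coe_add, EReal.coe_le_coe_iff, real_inner_smul_left]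
  refine le_of_forall_pos_le_add_mul (C := ‖v - p‖ ^ 2 / (2 * t)) fun s hs0 hs1 => ?_
  have hseg := (hprox ((1 - s) • p + s • v)).trans
    (add_le_add_left (hconv p v (1 - s) s (by linarith) hs0.le (by ring)) _)
  rw [hP, ← hV] at hseg
  norm_cast at hseg
  rw [show (1 - s) • p + s • v - x = (p - x) + s • (v - p) by module, norm_add_smul_sq,
    show p - x = -(x - p) by abel, inner_neg_left, norm_neg] at hseg
  have hscaled : s * (P + t⁻¹ * ⟪x - p, v - p⟫_ℝ) ≤ s * (V + s * (‖v - p‖ ^ 2 / (2 * t))) := by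
    field_simp
    field_simp at hseg
    nlinarith
  exact le_of_mul_le_mul_left hscaled hs0

/-- The Moreau envelope of the affine function `v ↦ ⟪z, v⟫ - c` at `w` is attained at `w - γz`,
since the gap is `‖v - w + γz‖² / (2γ)`. -/
lemma moreauEnv_eq_of_affine_minorant {γ : ℝ} (hγ : 0 < γ) {h : E k → EReal} {z w : E k} {c : ℝ}
    (hle : ∀ v, ((⟪z, v⟫_ℝ - c : ℝ) : EReal) ≤ h v)
    (heq : h (w - γ • z) = ((⟪z, w - γ • z⟫_ℝ - c : ℝ) : EReal)) :
    moreauEnv γ h w = ((⟪z, w⟫_ℝ - γ / 2 * ‖z‖ ^ 2 - c : ℝ) : EReal) := by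
  refine le_antisymm ((iInf_le _ (w - γ • z)).trans_eq ?_) (le_iInf fun v => ?_)
  · rw [heq, ← EReal.coe_add, EReal.coe_eq_coe_iff, sub_sub_cancel_left, norm_neg, norm_smul,
      inner_sub_right, real_inner_smul_right, real_inner_self_eq_norm_sq, Real.norm_of_nonneg hγ.le]
    field_simp
    ring
  · have hsq : 0 ≤ ‖(v - w) + γ • z‖ ^ 2 := sq_nonneg _
    rw [norm_add_smul_sq, real_inner_comm, inner_sub_right] at hsq
    refine le_trans ?_ (add_le_add_left (hle v) _)
    rw [← EReal.coe_add, EReal.coe_le_coe_iff]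
    field_simp
    nlinarith

end Convex

theorem AME_eq_moreauEnv_repr_general
    {n m : ℕ} (γ : ℝ) (hγ : 0 < γ)
    (f : E n → EReal) (g : E m → EReal) (A : E n →L[ℝ] E m)
    (hf : ProperClosedConvex f)
    (hg : ProperClosedConvex g)
    (hfeas : ∃ x, f x ≠ ⊤ ∧ g (A x) ≠ ⊤)
    (xmin : E m → E n)
    (hx : ∀ y x, f (xmin y) + ((⟪y, A (xmin y)⟫_ℝ : ℝ) : EReal)
        ≤ f x + ((⟪y, A x⟫_ℝ : ℝ) : EReal))
    (zmin : E m → E m)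
    (hz : ∀ y, IsProx γ⁻¹ g (γ⁻¹ • y + A (xmin y)) (zmin y)) :
    ∀ y : E m,
      AME f g A γ xmin zmin y =
        (conjFn f (-(ContinuousLinearMap.adjoint A y))
          - ((γ / 2 * ‖A (xmin y)‖ ^ 2 : ℝ) : EReal))
        + moreauEnv γ (conjFn g) (y + γ • A (xmin y)) := by
  obtain ⟨⟨-, hfbot⟩, -, -⟩ := hf
  obtain ⟨⟨-, hgbot⟩, -, hgconv⟩ := hg
  obtain ⟨x₀, hfx₀, hgx₀⟩ := hfeas
  intro y
  rw [AME]
  set x := xmin y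
  set z := zmin y
  lift f x to ℝ using ⟨EReal.ne_top_of_add_coe_le (hx y x₀) hfx₀, hfbot x⟩ with F hF
  lift g z to ℝ using ⟨EReal.ne_top_of_add_coe_le (hz y (A x₀)) hgx₀, hgbot z⟩ with G hG
  have hsubg : y + γ • A x - γ • z ∈ Subdiff g z := by
    convert (hz y).inv_smul_sub_mem_subdiff (inv_pos.2 hγ) hgconv hgbot hG.symm using 1
    rw [inv_inv, smul_sub, smul_add, smul_inv_smul₀ hγ.ne']
  rw [conjFn_eq_of_mem_subdiff hF.symm (neg_adjoint_mem_subdiff hF.symm (hx y)),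
    moreauEnv_eq_of_affine_minorant hγ (fun v => coe_inner_sub_le_conjFn hG.symm)
      (conjFn_eq_of_mem_subdiff hG.symm hsubg)]
  norm_cast
  rw [inner_neg_right, ContinuousLinearMap.adjoint_inner_right, inner_sub_right, norm_sub_sq_real,
    inner_add_right, real_inner_smul_right, real_inner_comm (A x) y, real_inner_comm z y,
    real_inner_comm (A x) z]
  ring

/-- Moreau-envelope representation of the AME:
`ψ_γ(y) = f*(-Aᵀy) - (γ/2)‖Ax(y)‖² + (g*)^γ(y + γ Ax(y))`. -/
theorem AME_eq_moreauEnv_repr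
    {n m : ℕ} (μ γ : ℝ) (hμ : 0 < μ) (hγ : 0 < γ)
    (f : E n → EReal) (g : E m → EReal) (A : E n →L[ℝ] E m)
    (hf : ProperClosedConvex f) (hsc : StronglyConvexWithMod μ f)
    (hg : ProperClosedConvex g)
    (hfeas : ∃ x, f x ≠ ⊤ ∧ g (A x) ≠ ⊤)
    (xmin : E m → E n)
    (hx : ∀ y x, f (xmin y) + ((⟪y, A (xmin y)⟫_ℝ : ℝ) : EReal)
        ≤ f x + ((⟪y, A x⟫_ℝ : ℝ) : EReal))
    (zmin : E m → E m)
    (hz : ∀ y, IsProx γ⁻¹ g (γ⁻¹ • y + A (xmin y)) (zmin y)) :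
    ∀ y : E m,
      AME f g A γ xmin zmin y =
        (conjFn f (-(ContinuousLinearMap.adjoint A y))
          - ((γ / 2 * ‖A (xmin y)‖ ^ 2 : ℝ) : EReal))
        + moreauEnv γ (conjFn g) (y + γ • A (xmin y)) :=
  AME_eq_moreauEnv_repr_general γ hγ f g A hf hg hfeas xmin hx zmin hz
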